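/- arXiv:2501.07829 — 3 statements merged into one kernel-verified Lean document; each statement's English description precedes it below -/
import Mathlib

section
/- If J is a monomial ideal of Borel type in k[x_1,...,x_n], then for every i the colon ideal J : x_i^∞ is also a monomial ideal of Borel type. -/
open MvPolynomial Finsupp Module

namespace Paper

variable {k : Type*} [Field k] {n : ℕ}

/-- `J` is a monomial ideal: generated by a set of monomials. -/
def IsMonomialIdeal (J : Ideal (MvPolynomial (Fin n) k)) : Prop :=
  ∃ G : Set (Fin n →₀ ℕ),
    J = Ideal.span ((fun d => (monomial d (1:k) : MvPolynomial (Fin n) k)) '' G)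

/-- The Borel-type condition: for `i < j` and a monomial `x^d ∈ J` with `x_j ∣ x^d`,
some `x_i^s · x^d / x_j` lies in `J`. -/
def BorelCond (J : Ideal (MvPolynomial (Fin n) k)) : Prop :=
  ∀ i j : Fin n, i < j → ∀ d : Fin n →₀ ℕ,
    (monomial d (1:k) : MvPolynomial (Fin n) k) ∈ J → d j ≠ 0 →
    ∃ s : ℕ,
      (monomial (d + Finsupp.single i s - Finsupp.single j 1) (1:k) :
        MvPolynomial (Fin n) k) ∈ J

/-- `J` is a monomial ideal of Borel type. -/
def IsBorelType (J : Ideal (MvPolynomial (Fin n) k)) : Prop :=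
  IsMonomialIdeal J ∧ BorelCond J

/-- The saturation `J : I^∞`. -/
noncomputable def sat (J I : Ideal (MvPolynomial (Fin n) k)) : Ideal (MvPolynomial (Fin n) k) :=
  ⨆ m : ℕ, Submodule.colon J ((I ^ m) : Ideal (MvPolynomial (Fin n) k))

/-- The product of the variables with (0-based) index `≥ r`, i.e. `x_{r+1} ⋯ x_n`. -/
noncomputable def tailProd (k : Type*) [Field k] (n r : ℕ) : MvPolynomial (Fin n) k :=
  ∏ i ∈ Finset.univ.filter (fun i : Fin n => r ≤ (i : ℕ)), X i

/-- `Φ_r(J) = J : (x_{r+1} ⋯ x_n)^∞`. -/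
noncomputable def Phi (r : ℕ) (J : Ideal (MvPolynomial (Fin n) k)) :
    Ideal (MvPolynomial (Fin n) k) :=
  sat J (Ideal.span {tailProd k n r})

/-- The projection `Π_r : k[x_1,…,x_n] → k[x_1,…,x_r]` sending `x_{r+1},…,x_n` to `0`. -/
noncomputable def projDown (k : Type*) [Field k] (n r : ℕ) :
    MvPolynomial (Fin n) k →ₐ[k] MvPolynomial (Fin r) k :=
  aeval (fun i : Fin n => if h : (i : ℕ) < r then X ⟨i, h⟩ else 0)

/-- `Π_r(J)`, the image ideal of `J` in `k[x_1,…,x_r]`. -/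
noncomputable def PiIdeal (r : ℕ) (J : Ideal (MvPolynomial (Fin n) k)) :
    Ideal (MvPolynomial (Fin r) k) :=
  J.map (projDown k n r).toRingHom

/-- The exponent `d` is a minimal generator of the monomial ideal `J`. -/
def IsMinGen (J : Ideal (MvPolynomial (Fin n) k)) (d : Fin n →₀ ℕ) : Prop :=
  (monomial d (1:k) : MvPolynomial (Fin n) k) ∈ J ∧
    ∀ d' : Fin n →₀ ℕ, d' ≤ d →
      (monomial d' (1:k) : MvPolynomial (Fin n) k) ∈ J → d' = d

/-- The leading exponent of a polynomial with respect to a monomial order. -/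
noncomputable def leadExp (m : MonomialOrder (Fin n)) (f : MvPolynomial (Fin n) k) :
    Fin n →₀ ℕ :=
  m.toSyn.symm (f.support.sup fun d => m.toSyn d)

/-- The initial ideal of `P` with respect to the monomial order `m`. -/
noncomputable def initialIdeal (m : MonomialOrder (Fin n)) (P : Ideal (MvPolynomial (Fin n) k)) :
    Ideal (MvPolynomial (Fin n) k) :=
  Ideal.span {g | ∃ f ∈ P, f ≠ 0 ∧ g = (monomial (leadExp m f) (1:k) : MvPolynomial (Fin n) k)}

/-- A homogeneous ideal: closed under taking homogeneous components. -/
def IsHomogIdeal (P : Ideal (MvPolynomial (Fin n) k)) : Prop :=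
  ∀ f ∈ P, ∀ i : ℕ, homogeneousComponent i f ∈ P

/-- The ideal generated by the variables `x_1, …, x_{i+1}` (0-based indices `≤ i`). -/
noncomputable def varIdealLe (k : Type*) [Field k] {n : ℕ} (i : Fin n) :
    Ideal (MvPolynomial (Fin n) k) :=
  Ideal.span ((fun j : Fin n => (X j : MvPolynomial (Fin n) k)) '' {j | j ≤ i})

/-- The Hilbert series of `S/I` as a power series with integer coefficients. -/
noncomputable def hilb {N : ℕ} (I : Ideal (MvPolynomial (Fin N) k)) : PowerSeries ℤ :=
  PowerSeries.mk fun i =>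
    (Module.finrank k (Submodule.map (Ideal.Quotient.mkₐ k I).toLinearMap
      (homogeneousSubmodule (Fin N) k i)) : ℤ)

/-- The `i`-th Hilbert coefficient read off from the numerator polynomial `q`:
the coefficient of `(t-1)^i` in `q`. -/
noncomputable def hc (q : Polynomial ℤ) (i : ℕ) : ℤ :=
  (Polynomial.taylor 1 q).coeff i

/-- The Krull dimension of the quotient ring `S/I`. -/
noncomputable def qdim {N : ℕ} (I : Ideal (MvPolynomial (Fin N) k)) : WithBot (WithTop ℕ) :=
  ringKrullDim (MvPolynomial (Fin N) k ⧸ I)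

/-- The embedding `k[x_1,…,x_r] → k[x_1,…,x_n]`. -/
noncomputable def inclUp (k : Type*) [Field k] {r n : ℕ} (h : r ≤ n) :
    MvPolynomial (Fin r) k →ₐ[k] MvPolynomial (Fin n) k :=
  rename (Fin.castLE h)

/-- The embedding of variables for the tail subring `k[x_{r+1},…,x_n]`. -/
def tailEmb (n r : ℕ) (h : r ≤ n) : Fin (n - r) → Fin n :=
  fun j => ⟨r + j.1, by omega⟩

/-- The inclusion `k[x_{r+1},…,x_n] → k[x_1,…,x_n]` as a ring hom. -/
noncomputable def tailIncl (k : Type*) [Field k] {n : ℕ} (r : ℕ) (h : r ≤ n) :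
    MvPolynomial (Fin (n - r)) k →+* MvPolynomial (Fin n) k :=
  (rename (tailEmb n r h)).toRingHom

/-- `J₁ = (J ∩ k[x_1,…,x_r])S`: the ideal generated by the monomials of `J`
lying in `k[x_1,…,x_r]`. -/
noncomputable def Jone (r : ℕ) (J : Ideal (MvPolynomial (Fin n) k)) :
    Ideal (MvPolynomial (Fin n) k) :=
  Ideal.span {g | ∃ d : Fin n →₀ ℕ, (∀ i : Fin n, r ≤ (i : ℕ) → d i = 0) ∧
    (monomial d (1:k) : MvPolynomial (Fin n) k) ∈ J ∧
    g = (monomial d (1:k) : MvPolynomial (Fin n) k)}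

/-- The quotient module `J₂/J₁` for ideals `J₁ ≤ J₂`. -/
abbrev quotMod (J₁ J₂ : Ideal (MvPolynomial (Fin n) k)) :=
  (J₂ : Submodule (MvPolynomial (Fin n) k) (MvPolynomial (Fin n) k)) ⧸
    (Submodule.comap
      (J₂ : Submodule (MvPolynomial (Fin n) k) (MvPolynomial (Fin n) k)).subtype
      (J₁ : Submodule (MvPolynomial (Fin n) k) (MvPolynomial (Fin n) k)))

/-- `J₂/J₁` as a module over `k[x_{r+1},…,x_n]`. -/
noncomputable def quotModTail (r : ℕ) (h : r ≤ n) (J₁ J₂ : Ideal (MvPolynomial (Fin n) k)) :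
    Module (MvPolynomial (Fin (n - r)) k) (quotMod J₁ J₂) :=
  Module.compHom _ (tailIncl k r h)

/-- The degrevlex property of a monomial order: compare total degrees first, and break
ties by the *last* variable in which the exponents differ, where *larger* exponent
means *smaller* monomial. -/
def IsDegRevLex (m : MonomialOrder (Fin n)) : Prop :=
  ∀ a b : Fin n →₀ ℕ, (m.toSyn a < m.toSyn b) ↔
    ((a.sum fun _ e => e) < (b.sum fun _ e => e) ∨
      ((a.sum fun _ e => e) = (b.sum fun _ e => e) ∧
        ∃ i : Fin n, b i < a i ∧ ∀ j : Fin n, i < j → a j = b j))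

end Paper

open Paper MvPolynomial

/-! A monomial `x^d` lies in `J : (x^e)^∞` exactly when some `x^(m•e + d)` lies in `J`. Hence
saturating a monomial ideal keeps it monomial (a polynomial is in it iff its monomials are), and a
Borel move on `x^d` is a Borel move on `x^(m•e + d)` that leaves the factor `x^(m•e)` alone. -/

namespace Paper

variable {k : Type*} [Field k] {n : ℕ}

theorem mem_sat_span_singleton_iff (J : Ideal (MvPolynomial (Fin n) k))
    (g f : MvPolynomial (Fin n) k) :
    f ∈ sat J (Ideal.span {g}) ↔ ∃ m : ℕ, g ^ m * f ∈ J := by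
  have hmono : Monotone fun m : ℕ => J.colon ((Ideal.span {g} ^ m : Ideal _) : Set _) :=
    fun _ _ hle => Submodule.colon_mono le_rfl (Ideal.pow_le_pow_right hle)
  rw [sat, Submodule.mem_iSup_of_directed _ hmono.directed_le]
  simp only [Ideal.span_singleton_pow, Ideal.mem_colon_span_singleton, mul_comm f]

theorem monomial_one_mem_sat_iff (J : Ideal (MvPolynomial (Fin n) k)) (e d : Fin n →₀ ℕ) :
    (monomial d (1 : k)) ∈ sat J (Ideal.span {monomial e (1 : k)}) ↔
      ∃ m : ℕ, (monomial (m • e + d) (1 : k)) ∈ J := by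
  simp only [mem_sat_span_singleton_iff, monomial_pow, monomial_mul, one_pow, one_mul]

theorem isMonomialIdeal_iff {J : Ideal (MvPolynomial (Fin n) k)} :
    IsMonomialIdeal J ↔ ∀ f ∈ J, ∀ d ∈ f.support, monomial d (1 : k) ∈ J := by
  constructor
  · rintro ⟨G, rfl⟩ f hf d hd
    obtain ⟨e, heG, hed⟩ := mem_ideal_span_monomial_image.mp hf d hd
    refine mem_ideal_span_monomial_image.mpr fun d' hd' => ⟨e, heG, ?_⟩
    rwa [Finset.mem_singleton.mp (support_monomial_subset hd')]
  · intro h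
    refine ⟨{d | monomial d (1 : k) ∈ J}, le_antisymm (fun f hf => ?_) ?_⟩
    · exact mem_ideal_span_monomial_image.mpr fun d hd => ⟨d, h f hf d hd, le_rfl⟩
    · rw [Ideal.span_le]
      rintro _ ⟨d, hd, rfl⟩
      exact hd

theorem IsMonomialIdeal.sat_monomial {J : Ideal (MvPolynomial (Fin n) k)}
    (hJ : IsMonomialIdeal J) (e : Fin n →₀ ℕ) :
    IsMonomialIdeal (sat J (Ideal.span {monomial e (1 : k)})) := by
  refine isMonomialIdeal_iff.mpr fun f hf d hd => ?_
  obtain ⟨m, hm⟩ := (mem_sat_span_singleton_iff J _ f).mp hf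
  refine (monomial_one_mem_sat_iff J e d).mpr ⟨m, isMonomialIdeal_iff.mp hJ _ hm _ ?_⟩
  rw [monomial_pow, one_pow, MvPolynomial.mem_support_iff, coeff_monomial_mul, one_mul]
  exact MvPolynomial.mem_support_iff.mp hd

theorem BorelCond.sat_monomial {J : Ideal (MvPolynomial (Fin n) k)} (hJ : BorelCond J)
    (e : Fin n →₀ ℕ) : BorelCond (sat J (Ideal.span {monomial e (1 : k)})) := by
  intro a b hab d hd hdb
  obtain ⟨m, hm⟩ := (monomial_one_mem_sat_iff J e d).mp hd
  obtain ⟨s, hs⟩ := hJ a b hab _ hm (by rw [Finsupp.add_apply]; omega)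
  refine ⟨s, (monomial_one_mem_sat_iff J e _).mpr ⟨m, ?_⟩⟩
  have hle : Finsupp.single b 1 ≤ d + Finsupp.single a s := by
    rw [Finsupp.single_le_iff, Finsupp.add_apply]
    omega
  rwa [← add_tsub_assoc_of_le hle, ← add_assoc]

end Paper

/-- If `J` is a monomial ideal of Borel type, then so is
`J : x_i^∞` for every variable `x_i`. -/
theorem stmt2 {k : Type*} [Field k] {n : ℕ}
    (J : Ideal (MvPolynomial (Fin n) k)) (hJ : IsBorelType J) (i : Fin n) :
    IsBorelType (sat J (Ideal.span {(X i : MvPolynomial (Fin n) k)})) := by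
  rw [X]
  obtain ⟨hmon, hborel⟩ := hJ
  exact ⟨IsMonomialIdeal.sat_monomial hmon _, BorelCond.sat_monomial hborel _⟩
end

section
/- Let J be a saturated monomial ideal of Borel type in S = k[x_1,...,x_n] (i.e., J : m^∞ = J, where m = (x_1,...,x_n)). Then J : x_n^∞ = J, i.e., J is saturated with respect to x_n alone. -/
open MvPolynomial Finsupp Module

open Paper MvPolynomial

/-! If `u · x_n ∈ J` for a monomial `u`, the Borel moves give `u · x_i ^ s_i ∈ J` for every `i`,
so every variable lies in the radical of `J : u`; as `m` is finitely generated, some power of `m`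
lies in `J : u`, i.e. `u ∈ J : m^∞ = J`. Because `J` is monomial, this gives `J : x_n = J`, and
hence `J : x_n^∞ = J`. -/

theorem Ideal.exists_pow_mul_mem_of_forall_pow_mul_mem {R : Type*} [CommSemiring R] {J : Ideal R}
    {s : Set R} (hs : s.Finite) {f : R} (h : ∀ x ∈ s, ∃ m : ℕ, f * x ^ m ∈ J) :
    ∃ N : ℕ, ∀ p ∈ Ideal.span s ^ N, f * p ∈ J := by
  have hrad : Ideal.span s ≤ (J.colon {f}).radical := by
    rw [Ideal.span_le]
    intro x hx
    obtain ⟨m, hm⟩ := h x hx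
    exact ⟨m, Submodule.mem_colon_singleton.2 (by rwa [smul_eq_mul, mul_comm])⟩
  obtain ⟨N, hN⟩ := Ideal.exists_pow_le_of_le_radical_of_fg hrad ⟨hs.toFinset, by simp⟩
  refine ⟨N, fun p hp => ?_⟩
  have := Submodule.mem_colon_singleton.1 (hN hp)
  rwa [smul_eq_mul, mul_comm] at this

namespace Paper

variable {k : Type*} [Field k] {n : ℕ}

theorem mem_sat_iff {J I : Ideal (MvPolynomial (Fin n) k)} {f : MvPolynomial (Fin n) k} :
    f ∈ sat J I ↔ ∃ m : ℕ, ∀ p ∈ I ^ m, f * p ∈ J := by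
  unfold sat
  rw [Submodule.mem_iSup_of_directed _ (Monotone.directed_le fun a b hab =>
    Submodule.colon_mono le_rfl (Ideal.pow_le_pow_right hab))]
  simp only [Submodule.mem_colon, smul_eq_mul, SetLike.mem_coe]

theorem sat_span_singleton_eq_self {J : Ideal (MvPolynomial (Fin n) k)}
    {x : MvPolynomial (Fin n) k} (h : ∀ f, f * x ∈ J → f ∈ J) :
    sat J (Ideal.span {x}) = J := by
  have hpow : ∀ m f, f * x ^ m ∈ J → f ∈ J := by
    intro m
    induction m with
    | zero => simp
    | succ m ih => exact fun f hf => h f (ih _ (by rwa [pow_succ', ← mul_assoc] at hf))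
  refine le_antisymm (fun f hf => ?_) fun f hf =>
    mem_sat_iff.2 ⟨0, fun p _ => J.mul_mem_right p hf⟩
  obtain ⟨m, hm⟩ := mem_sat_iff.1 hf
  exact hpow m f (hm _ (Ideal.pow_mem_pow (Ideal.mem_span_singleton_self x) m))

theorem IsMonomialIdeal.mem_iff {J : Ideal (MvPolynomial (Fin n) k)} (hJ : IsMonomialIdeal J)
    {f : MvPolynomial (Fin n) k} : f ∈ J ↔ ∀ e ∈ f.support, monomial e (1 : k) ∈ J := by
  obtain ⟨G, rfl⟩ := hJ
  simp only [mem_ideal_span_monomial_image, MvPolynomial.mem_support_iff, coeff_monomial, ne_eq,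
    ite_eq_right_iff, one_ne_zero, imp_false, Decidable.not_not, forall_eq']

theorem IsMonomialIdeal.mem_of_mul_X_mem {J : Ideal (MvPolynomial (Fin n) k)}
    (hJ : IsMonomialIdeal J) {i : Fin n}
    (h : ∀ e, monomial (e + single i 1) (1 : k) ∈ J → monomial e (1 : k) ∈ J)
    {f : MvPolynomial (Fin n) k} (hf : f * X i ∈ J) : f ∈ J := by
  rw [hJ.mem_iff] at hf ⊢
  intro e he
  apply h
  apply hf
  rw [support_mul_X]
  exact Finset.mem_map_of_mem _ he

theorem BorelCond.exists_monomial_add_single_mem {J : Ideal (MvPolynomial (Fin n) k)}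
    (hB : BorelCond J) {l : Fin n} (hl : ∀ j, j ≤ l) {u : Fin n →₀ ℕ}
    (hu : monomial (u + single l 1) (1 : k) ∈ J) (i : Fin n) :
    ∃ s, monomial (u + single i s) (1 : k) ∈ J := by
  rcases (hl i).lt_or_eq with hi | rfl
  · obtain ⟨s, hs⟩ := hB i l hi _ hu (by simp)
    refine ⟨s, ?_⟩
    rwa [add_right_comm, add_tsub_cancel_right] at hs
  · exact ⟨1, hu⟩

theorem BorelCond.monomial_mem_sat_of_add_single_mem {J : Ideal (MvPolynomial (Fin n) k)}
    (hB : BorelCond J) {l : Fin n} (hl : ∀ j, j ≤ l) {u : Fin n →₀ ℕ}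
    (hu : monomial (u + single l 1) (1 : k) ∈ J) :
    monomial u (1 : k) ∈ sat J (Ideal.span (Set.range X)) := by
  refine mem_sat_iff.2 (Ideal.exists_pow_mul_mem_of_forall_pow_mul_mem (Set.finite_range X) ?_)
  rintro _ ⟨i, rfl⟩
  obtain ⟨s, hs⟩ := hB.exists_monomial_add_single_mem hl hu i
  exact ⟨s, by rwa [X_pow_eq_monomial, monomial_mul, mul_one]⟩

end Paper

/-- A saturated monomial ideal of Borel type is saturated with
respect to the last variable `x_n` alone: `J : x_n^∞ = J`. -/
theorem stmt5 {k : Type*} [Field k] {n : ℕ} (hn : 0 < n)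
    (J : Ideal (MvPolynomial (Fin n) k)) (hJ : IsBorelType J)
    (hsat : sat J (Ideal.span (Set.range (X : Fin n → MvPolynomial (Fin n) k))) = J) :
    sat J (Ideal.span {(X (⟨n - 1, by omega⟩ : Fin n) : MvPolynomial (Fin n) k)}) = J := by
  obtain ⟨hmon, hB⟩ := hJ
  have hlast : ∀ i : Fin n, i ≤ ⟨n - 1, by omega⟩ := fun i => Fin.le_def.2 (by simp; omega)
  refine sat_span_singleton_eq_self fun f => hmon.mem_of_mul_X_mem fun u hu => ?_
  exact hsat ▸ hB.monomial_mem_sat_of_add_single_mem hlast hu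
end

section
/- Let J be a monomial ideal of Borel type in S = k[x_1,...,x_n] with dim(S/J) = d, and let r ≥ n − d. Set J_1 = (J ∩ k[x_1,...,x_r])S and J_2 = J : (x_{r+1}···x_n)^∞. Then J_2/J_1 is a free module of finite rank over k[x_{r+1},...,x_n]. -/
open MvPolynomial Finsupp Module

/-!
Both `J₁` and `J₂` are monomial ideals containing a monomial `x^e` exactly when they contain its
head `x₁^{e₁} ⋯ x_r^{e_r}`: for `J₁` by construction, for `J₂` because the saturation absorbs any
power of the tail variables. Hence, over `k[x_{r+1}, …, x_n]`, `J₂/J₁` is free on the classes of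
the monomials of `k[x_1, …, x_r]` lying in `J₂` but not in `J₁`. There are finitely many: by
Dickson's lemma they lie above finitely many minimal head exponents `a₀` of `J₂`, and for each
`a₀` the Borel condition, trading tail variables for powers of `x_i` (`i ≤ r`), puts some
`x^{a₀} x_i^{S_i}` into `J`, which confines the exponents above `a₀` but outside `J` to a box.
-/

namespace Paper

section MonomialMembership

variable {σ R : Type*} [CommSemiring R] {I : Ideal (MvPolynomial σ R)}

theorem monomial_one_mem_of_le {d e : σ →₀ ℕ} (hd : monomial d (1 : R) ∈ I) (hde : d ≤ e) :
    monomial e (1 : R) ∈ I := by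
  rw [← tsub_add_cancel_of_le hde, ← mul_one (1 : R), ← monomial_mul]
  exact I.mul_mem_left _ hd

theorem mem_of_forall_monomial_one_mem {f : MvPolynomial σ R}
    (hf : ∀ e ∈ f.support, monomial e (1 : R) ∈ I) : f ∈ I := by
  rw [f.as_sum]
  refine I.sum_mem fun e he => ?_
  simpa [C_mul_monomial] using I.mul_mem_left (C (coeff e f)) (hf e he)

end MonomialMembership

variable {k : Type*} [Field k] {n : ℕ}

theorem IsMonomialIdeal.monomial_one_mem {J : Ideal (MvPolynomial (Fin n) k)}
    (hJ : IsMonomialIdeal J) {f : MvPolynomial (Fin n) k} (hf : f ∈ J) {e : Fin n →₀ ℕ}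
    (he : e ∈ f.support) : monomial e (1 : k) ∈ J := by
  obtain ⟨G, rfl⟩ := hJ
  obtain ⟨g, hg, hge⟩ := mem_ideal_span_monomial_image.1 hf e he
  exact monomial_one_mem_of_le (Ideal.subset_span ⟨g, hg, rfl⟩) hge

section HeadTail

variable {r : ℕ}

def headPart (r : ℕ) (e : Fin n →₀ ℕ) : Fin n →₀ ℕ :=
  e.filter fun i => (i : ℕ) < r

theorem headPart_apply (e : Fin n →₀ ℕ) (i : Fin n) :
    headPart r e i = if (i : ℕ) < r then e i else 0 :=
  Finsupp.filter_apply _ _ _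

theorem headPart_le (e : Fin n →₀ ℕ) : headPart r e ≤ e := fun i => by
  rw [headPart_apply]; split_ifs <;> simp

theorem headPart_mono {e e' : Fin n →₀ ℕ} (h : e ≤ e') : headPart r e ≤ headPart r e' :=
  fun i => by simp only [headPart_apply]; split_ifs <;> simp [h i]

theorem headPart_add (e e' : Fin n →₀ ℕ) : headPart r (e + e') = headPart r e + headPart r e' :=
  Finsupp.filter_add

@[simp]
theorem headPart_headPart (e : Fin n →₀ ℕ) : headPart r (headPart r e) = headPart r e := by
  ext i; simp only [headPart_apply]; split_ifs <;> rfl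

theorem headPart_eq_self_iff {e : Fin n →₀ ℕ} :
    headPart r e = e ↔ ∀ i : Fin n, r ≤ (i : ℕ) → e i = 0 := by
  rw [headPart, Finsupp.filter_eq_self_iff]
  exact forall_congr' fun i => by omega

variable (hrn : r ≤ n)

theorem tailEmb_injective : Function.Injective (tailEmb n r hrn) := fun a b hab => by
  simpa [tailEmb, Fin.ext_iff] using hab

theorem mem_range_tailEmb {i : Fin n} : i ∈ Set.range (tailEmb n r hrn) ↔ r ≤ (i : ℕ) := by
  refine ⟨?_, fun h => ⟨⟨i - r, by omega⟩, Fin.ext (by simp [tailEmb]; omega)⟩⟩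
  rintro ⟨j, rfl⟩
  simp [tailEmb]

theorem headPart_mapDomain_tailEmb (b : Fin (n - r) →₀ ℕ) :
    headPart r (b.mapDomain (tailEmb n r hrn)) = 0 := by
  ext i
  rw [headPart_apply]
  split_ifs with hi
  · exact Finsupp.mapDomain_of_notMem_range _ _ (by rw [mem_range_tailEmb]; omega)
  · rfl

noncomputable def tailExponent (e : Fin n →₀ ℕ) : Fin (n - r) →₀ ℕ :=
  e.comapDomain (tailEmb n r hrn) (tailEmb_injective hrn).injOn

theorem headPart_add_mapDomain_tailExponent (e : Fin n →₀ ℕ) :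
    headPart r e + (tailExponent hrn e).mapDomain (tailEmb n r hrn) = e := by
  ext i
  rw [Finsupp.add_apply, headPart_apply]
  split_ifs with hi
  · rw [Finsupp.mapDomain_of_notMem_range _ _ (by rw [mem_range_tailEmb]; omega), add_zero]
  · obtain ⟨j, rfl⟩ := (mem_range_tailEmb hrn).2 (not_lt.1 hi)
    rw [Finsupp.mapDomain_apply (tailEmb_injective hrn), zero_add]
    rfl

theorem tailIncl_monomial_mul (b : Fin (n - r) →₀ ℕ) (a : Fin n →₀ ℕ) (c : k) :
    tailIncl k r hrn (monomial b c) * monomial a 1 =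
      monomial (b.mapDomain (tailEmb n r hrn) + a) c := by
  rw [tailIncl, AlgHom.toRingHom_eq_coe, RingHom.coe_coe, rename_monomial, monomial_mul, mul_one]

theorem monomial_eq_tailIncl_mul (e : Fin n →₀ ℕ) (c : k) :
    monomial e c =
      tailIncl k r hrn (monomial (tailExponent hrn e) c) * monomial (headPart r e) 1 := by
  rw [tailIncl_monomial_mul, add_comm, headPart_add_mapDomain_tailExponent]

theorem headPart_of_mem_support_tailIncl_mul {a e : Fin n →₀ ℕ} (ha : headPart r a = a)
    {t : MvPolynomial (Fin (n - r)) k} (he : e ∈ (tailIncl k r hrn t * monomial a 1).support) :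
    headPart r e = a := by
  classical
  rw [MvPolynomial.mem_support_iff, coeff_mul_monomial'] at he
  split_ifs at he with hae
  · rw [mul_one, ← MvPolynomial.mem_support_iff, tailIncl, AlgHom.toRingHom_eq_coe, RingHom.coe_coe,
      support_rename_of_injective (tailEmb_injective hrn), Finset.mem_image] at he
    obtain ⟨b, -, hb⟩ := he
    rw [← tsub_add_cancel_of_le hae, ← hb, headPart_add, headPart_mapDomain_tailEmb, ha, zero_add]
  · exact absurd rfl he

end HeadTail

section HeadMonomial

variable {r : ℕ}

/-- `I` is extended from a monomial ideal of `k[x_1, …, x_r]`. -/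
def IsHeadMonomial (r : ℕ) (I : Ideal (MvPolynomial (Fin n) k)) : Prop :=
  ∀ f : MvPolynomial (Fin n) k, f ∈ I ↔ ∀ e ∈ f.support, monomial (headPart r e) (1 : k) ∈ I

theorem IsHeadMonomial.monomial_mem {I : Ideal (MvPolynomial (Fin n) k)}
    (hI : IsHeadMonomial r I) {e : Fin n →₀ ℕ} (he : monomial (headPart r e) (1 : k) ∈ I) (c : k) :
    monomial e c ∈ I := by
  classical
  refine (hI _).2 fun e' he' => ?_
  rw [support_monomial] at he'
  split_ifs at he' <;> simp_all

def headBasisIndex (r : ℕ) (I₁ I₂ : Ideal (MvPolynomial (Fin n) k)) : Set (Fin n →₀ ℕ) :=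
  {a | headPart r a = a ∧ monomial a (1 : k) ∈ I₂ ∧ monomial a (1 : k) ∉ I₁}

noncomputable def headBasisVec (r : ℕ) (I₁ I₂ : Ideal (MvPolynomial (Fin n) k))
    (a : headBasisIndex r I₁ I₂) : quotMod I₁ I₂ :=
  Submodule.Quotient.mk ⟨monomial a.1 1, a.2.2.1⟩

variable (hrn : r ≤ n) {I₁ I₂ : Ideal (MvPolynomial (Fin n) k)}

theorem linearCombination_headBasisVec
    (l : headBasisIndex r I₁ I₂ →₀ MvPolynomial (Fin (n - r)) k) :
    letI := quotModTail r hrn I₁ I₂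
    Finsupp.linearCombination _ (headBasisVec r I₁ I₂) l =
      Submodule.Quotient.mk ⟨∑ a ∈ l.support, tailIncl k r hrn (l a) * monomial a.1 1,
        I₂.sum_mem fun a _ => I₂.mul_mem_left _ a.2.2.1⟩ := by
  let := quotModTail r hrn I₁ I₂
  rw [Finsupp.linearCombination_apply, Finsupp.sum]
  trans Submodule.mkQ _
    (∑ a ∈ l.support, ⟨tailIncl k r hrn (l a) * monomial a.1 1, I₂.mul_mem_left _ a.2.2.1⟩)
  · rw [map_sum]
    rfl
  · exact congrArg (Submodule.mkQ _) (Subtype.ext (by simp))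

theorem linearIndependent_headBasisVec (h₁ : IsHeadMonomial r I₁) :
    letI := quotModTail r hrn I₁ I₂
    LinearIndependent (MvPolynomial (Fin (n - r)) k) (headBasisVec r I₁ I₂) := by
  let := quotModTail r hrn I₁ I₂
  rw [linearIndependent_iff]
  intro l hl
  set term : headBasisIndex r I₁ I₂ → MvPolynomial (Fin n) k :=
    fun a => tailIncl k r hrn (l a) * monomial a.1 1
  have hsum : ∑ a ∈ l.support, term a ∈ I₁ := by
    rw [linearCombination_headBasisVec, Submodule.Quotient.mk_eq_zero] at hl
    exact hl
  by_contra hl0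
  obtain ⟨a, ha⟩ := Finsupp.support_nonempty_iff.2 hl0
  have hterm : term a ≠ 0 := mul_ne_zero
    ((map_ne_zero_iff _ (rename_injective _ (tailEmb_injective hrn))).2
      (Finsupp.mem_support_iff.1 ha)) (by simp)
  obtain ⟨e, he⟩ := support_nonempty.2 hterm
  have hea : headPart r e = a := headPart_of_mem_support_tailIncl_mul hrn a.2.1 he
  have hcoeff : coeff e (∑ b ∈ l.support, term b) = coeff e (term a) := by
    rw [coeff_sum]
    refine Finset.sum_eq_single a (fun b _ hba => ?_) (fun h => absurd ha h)
    by_contra hb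
    exact hba (Subtype.ext ((headPart_of_mem_support_tailIncl_mul hrn b.2.1
      (MvPolynomial.mem_support_iff.2 hb)).symm.trans hea))
  refine a.2.2.2 (hea ▸ (h₁ _).1 hsum e ?_)
  rw [MvPolynomial.mem_support_iff, hcoeff]
  exact MvPolynomial.mem_support_iff.1 he

theorem span_headBasisVec (h₁ : IsHeadMonomial r I₁) (h₂ : IsHeadMonomial r I₂) :
    letI := quotModTail r hrn I₁ I₂
    ⊤ ≤ Submodule.span (MvPolynomial (Fin (n - r)) k) (Set.range (headBasisVec r I₁ I₂)) := by
  let := quotModTail r hrn I₁ I₂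
  rintro z -
  obtain ⟨⟨f, hf⟩, rfl⟩ := Submodule.Quotient.mk_surjective _ z
  have hterm (e : Fin n →₀ ℕ) : monomial e (coeff e f) ∈ I₂ := by
    by_cases he : e ∈ f.support
    · exact h₂.monomial_mem ((h₂ f).1 hf e he) _
    · simp [MvPolynomial.notMem_support_iff.1 he]
  have hsum : (⟨f, hf⟩ : I₂) = ∑ e ∈ f.support, ⟨monomial e (coeff e f), hterm e⟩ :=
    Subtype.ext (by simp [← f.as_sum])
  rw [hsum, ← Submodule.mkQ_apply, map_sum]
  refine Submodule.sum_mem _ fun e he => ?_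
  by_cases hhead : monomial (headPart r e) (1 : k) ∈ I₁
  · have hzero : (Submodule.Quotient.mk ⟨_, hterm e⟩ : quotMod I₁ I₂) = 0 :=
      (Submodule.Quotient.mk_eq_zero _).2 (h₁.monomial_mem hhead _)
    rw [Submodule.mkQ_apply, hzero]
    exact Submodule.zero_mem _
  · have ha : headPart r e ∈ headBasisIndex r I₁ I₂ :=
      ⟨headPart_headPart e, (h₂ f).1 hf e he, hhead⟩
    have hsplit : (⟨monomial e (coeff e f), hterm e⟩ : I₂) =
        ⟨tailIncl k r hrn (monomial (tailExponent hrn e) (coeff e f)) * monomial (headPart r e) 1,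
          I₂.mul_mem_left _ ha.2.1⟩ :=
      Subtype.ext (monomial_eq_tailIncl_mul hrn e _)
    rw [Submodule.mkQ_apply, hsplit]
    exact Submodule.smul_mem _ (monomial (tailExponent hrn e) (coeff e f))
      (Submodule.subset_span (Set.mem_range_self (⟨_, ha⟩ : headBasisIndex r I₁ I₂)))

theorem free_and_finite_quotMod (h₁ : IsHeadMonomial r I₁) (h₂ : IsHeadMonomial r I₂)
    (hfin : (headBasisIndex r I₁ I₂).Finite) :
    @Module.Free (MvPolynomial (Fin (n - r)) k) (quotMod I₁ I₂) _ _
      (quotModTail r hrn I₁ I₂) ∧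
    @Module.Finite (MvPolynomial (Fin (n - r)) k) (quotMod I₁ I₂) _ _
      (quotModTail r hrn I₁ I₂) := by
  let := quotModTail r hrn I₁ I₂
  have := hfin.to_subtype
  let b := Basis.mk (linearIndependent_headBasisVec hrn h₁) (span_headBasisVec hrn h₁ h₂)
  exact ⟨.of_basis b, .of_basis b⟩

end HeadMonomial

section Extension

variable {r : ℕ} (J : Ideal (MvPolynomial (Fin n) k))

theorem mem_Jone_iff (f : MvPolynomial (Fin n) k) :
    f ∈ Jone r J ↔ ∀ e ∈ f.support, monomial (headPart r e) (1 : k) ∈ J := by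
  have hgen : {g | ∃ d : Fin n →₀ ℕ, (∀ i : Fin n, r ≤ (i : ℕ) → d i = 0) ∧
      (monomial d (1 : k) : MvPolynomial (Fin n) k) ∈ J ∧ g = monomial d (1 : k)} =
      (fun d => monomial d (1 : k)) '' {d | headPart r d = d ∧ monomial d (1 : k) ∈ J} := by
    ext g
    constructor
    · rintro ⟨d, hd, hdJ, rfl⟩
      exact ⟨d, ⟨headPart_eq_self_iff.2 hd, hdJ⟩, rfl⟩
    · rintro ⟨d, ⟨hd, hdJ⟩, rfl⟩
      exact ⟨d, headPart_eq_self_iff.1 hd, hdJ, rfl⟩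
  rw [Jone, hgen, mem_ideal_span_monomial_image]
  refine forall₂_congr fun e _ => ⟨?_, fun h => ⟨_, ⟨headPart_headPart e, h⟩, headPart_le e⟩⟩
  rintro ⟨d, ⟨hd, hdJ⟩, hde⟩
  exact monomial_one_mem_of_le hdJ (hd ▸ headPart_mono hde)

theorem monomial_mem_Jone_iff (e : Fin n →₀ ℕ) :
    monomial e (1 : k) ∈ Jone r J ↔ monomial (headPart r e) (1 : k) ∈ J := by
  classical
  simp [mem_Jone_iff, support_monomial]

theorem isHeadMonomial_Jone : IsHeadMonomial r (Jone r J) := fun f => by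
  simp only [mem_Jone_iff J f, monomial_mem_Jone_iff, headPart_headPart]

end Extension

section Saturation

variable {r : ℕ} (J : Ideal (MvPolynomial (Fin n) k))

theorem mem_Phi_iff_exists (f : MvPolynomial (Fin n) k) :
    f ∈ Phi r J ↔ ∃ m : ℕ, f * tailProd k n r ^ m ∈ J := by
  have hmono : Monotone fun m : ℕ =>
      J.colon ((Ideal.span {tailProd k n r} ^ m : Ideal (MvPolynomial (Fin n) k)) : Set _) :=
    fun m m' h => Submodule.colon_mono le_rfl (Ideal.pow_le_pow_right h)
  rw [Phi, sat, Submodule.mem_iSup_of_directed _ hmono.directed_le]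
  simp only [Ideal.span_singleton_pow, Ideal.mem_colon_span_singleton]

noncomputable def tailExp (r : ℕ) : Fin n →₀ ℕ :=
  ∑ i ∈ Finset.univ.filter (fun i : Fin n => r ≤ (i : ℕ)), single i 1

theorem tailExp_apply (i : Fin n) : tailExp r i = if r ≤ (i : ℕ) then 1 else 0 := by
  simp [tailExp, Finsupp.finsetSum_apply, single_apply]

@[simp]
theorem headPart_smul_tailExp (m : ℕ) : headPart r (m • tailExp (n := n) r) = 0 := by
  ext i
  simp only [headPart_apply, Finsupp.smul_apply, tailExp_apply, smul_eq_mul]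
  split_ifs <;> first | rfl | omega

theorem tailProd_eq_monomial : tailProd k n r = monomial (tailExp r) 1 := by
  rw [tailProd, tailExp, monomial_sum_one]
  rfl

theorem monomial_mem_Phi_iff (e : Fin n →₀ ℕ) :
    monomial e (1 : k) ∈ Phi r J ↔ ∃ m : ℕ, monomial (e + m • tailExp r) (1 : k) ∈ J := by
  simp [mem_Phi_iff_exists, tailProd_eq_monomial, monomial_pow, monomial_mul]

theorem monomial_mem_Phi_iff_headPart (e : Fin n →₀ ℕ) :
    monomial e (1 : k) ∈ Phi r J ↔ monomial (headPart r e) (1 : k) ∈ Phi r J := by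
  refine ⟨fun h => ?_, fun h => monomial_one_mem_of_le h (headPart_le e)⟩
  obtain ⟨m, hm⟩ := (monomial_mem_Phi_iff J e).1 h
  refine (monomial_mem_Phi_iff J _).2 ⟨degree e + m, monomial_one_mem_of_le hm fun i => ?_⟩
  have hei := le_degree i e
  simp only [Finsupp.add_apply, Finsupp.smul_apply, headPart_apply, tailExp_apply, smul_eq_mul]
  split_ifs <;> omega

theorem IsMonomialIdeal.isHeadMonomial_Phi {J : Ideal (MvPolynomial (Fin n) k)}
    (hJ : IsMonomialIdeal J) : IsHeadMonomial r (Phi r J) := fun f => by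
  refine ⟨fun hf e he => ?_, fun h => mem_of_forall_monomial_one_mem fun e he =>
    (monomial_mem_Phi_iff_headPart J e).2 (h e he)⟩
  obtain ⟨m, hm⟩ := (mem_Phi_iff_exists J f).1 hf
  rw [← monomial_mem_Phi_iff_headPart, monomial_mem_Phi_iff]
  refine ⟨m, hJ.monomial_one_mem hm ?_⟩
  rwa [tailProd_eq_monomial, monomial_pow, one_pow, MvPolynomial.mem_support_iff,
    coeff_mul_monomial, mul_one, ← MvPolynomial.mem_support_iff]

end Saturation

section Borel

variable {r : ℕ} {J : Ideal (MvPolynomial (Fin n) k)}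

theorem BorelCond.exists_monomial_headPart_add_single_mem (hJ : BorelCond J) {i : Fin n}
    (hi : (i : ℕ) < r) {e : Fin n →₀ ℕ} (he : monomial e (1 : k) ∈ J) :
    ∃ S : ℕ, monomial (headPart r e + single i S) (1 : k) ∈ J := by
  -- each Borel move trades one tail variable for a power of `x_i`
  induction hw : degree (e - headPart r e) generalizing e with
  | zero =>
    have : headPart r e = e :=
      le_antisymm (headPart_le e) (tsub_eq_zero_iff_le.1 ((degree_eq_zero_iff _).1 hw))
    exact ⟨0, by simpa [this]⟩
  | succ w ih =>
    obtain ⟨j, hj⟩ : ∃ j, (e - headPart r e) j ≠ 0 := by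
      by_contra! h
      simp [show e - headPart r e = 0 from Finsupp.ext h] at hw
    have hjr : r ≤ (j : ℕ) := by
      by_contra hjr
      simp [headPart_apply, not_le.1 hjr] at hj
    have hej : e j ≠ 0 := by simpa [headPart_apply, not_lt.2 hjr] using hj
    obtain ⟨s, hs⟩ := hJ i j (Fin.lt_def.2 (by omega)) e he hej
    have hhead : headPart r (e + single i s - single j 1) = headPart r e + single i s := by
      ext l
      simp only [headPart_apply, Finsupp.add_apply, Finsupp.tsub_apply, single_apply]
      split_ifs <;> subst_vars <;> omega
    have htail : e + single i s - single j 1 - headPart r (e + single i s - single j 1) +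
        single j 1 = e - headPart r e := by
      ext l
      simp only [headPart_apply, Finsupp.add_apply, Finsupp.tsub_apply, single_apply]
      split_ifs <;> subst_vars <;> omega
    obtain ⟨S, hS⟩ := ih hs (by simpa [hw] using congrArg degree htail)
    exact ⟨s + S, by rwa [hhead, add_assoc, ← single_add] at hS⟩

theorem BorelCond.finite_monomial_notMem_of_le (hJ : BorelCond J) {a₀ : Fin n →₀ ℕ}
    (ha₀ : headPart r a₀ = a₀) (hΦ : monomial a₀ (1 : k) ∈ Phi r J) :
    {a | headPart r a = a ∧ a₀ ≤ a ∧ monomial a (1 : k) ∉ J}.Finite := by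
  obtain ⟨m, hm⟩ := (monomial_mem_Phi_iff J a₀).1 hΦ
  have hbound (i : Fin n) : ∃ S : ℕ, (i : ℕ) < r → monomial (a₀ + single i S) (1 : k) ∈ J := by
    by_cases hi : (i : ℕ) < r
    · obtain ⟨S, hS⟩ := hJ.exists_monomial_headPart_add_single_mem hi hm
      rw [headPart_add, ha₀, headPart_smul_tailExp, add_zero] at hS
      exact ⟨S, fun _ => hS⟩
    · exact ⟨0, fun h => absurd h hi⟩
  choose S hS using hbound
  refine (Set.finite_Iic (a₀ + Finsupp.equivFunOnFinite.symm S)).subset ?_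
  rintro a ⟨ha, ha₀a, haJ⟩ i
  by_cases hi : (i : ℕ) < r
  · by_contra! hlt
    refine haJ (monomial_one_mem_of_le (hS i hi) fun l => ?_)
    have := ha₀a l
    simp only [Finsupp.add_apply, Finsupp.coe_equivFunOnFinite_symm, single_apply] at hlt ⊢
    split_ifs <;> subst_vars <;> omega
  · rw [← ha, headPart_apply, if_neg hi]
    exact Nat.zero_le _

theorem BorelCond.finite_headBasisIndex (hJ : BorelCond J) :
    (headBasisIndex r (Jone r J) (Phi r J)).Finite := by
  let H := {a | headPart r a = a ∧ monomial a (1 : k) ∈ Phi r J}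
  have hmin : {a | Minimal (· ∈ H) a}.Finite :=
    WellQuasiOrderedLE.finite_of_isAntichain (setOfPred_minimal_antichain _)
  refine (hmin.biUnion fun a₀ ha₀ => hJ.finite_monomial_notMem_of_le ha₀.1.1 ha₀.1.2).subset ?_
  rintro a ⟨ha, haΦ, haJ⟩
  obtain ⟨a₀, ha₀a, ha₀⟩ := exists_minimal_le_of_wellFoundedLT (· ∈ H) a ⟨ha, haΦ⟩
  exact Set.mem_biUnion ha₀ ⟨ha, ha₀a, by rwa [monomial_mem_Jone_iff, ha] at haJ⟩

end Borel

end Paper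

open Paper MvPolynomial

theorem stmt10_general {k : Type*} [Field k] {n : ℕ}
    (J : Ideal (MvPolynomial (Fin n) k)) (hB : IsBorelType J)
    (r : ℕ) (hrn : r ≤ n) :
    @Module.Free (MvPolynomial (Fin (n - r)) k) (quotMod (Jone r J) (Phi r J)) _ _
      (quotModTail r hrn (Jone r J) (Phi r J)) ∧
    @Module.Finite (MvPolynomial (Fin (n - r)) k) (quotMod (Jone r J) (Phi r J)) _ _
      (quotModTail r hrn (Jone r J) (Phi r J)) :=
  free_and_finite_quotMod hrn (isHeadMonomial_Jone J) hB.1.isHeadMonomial_Phi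
    hB.2.finite_headBasisIndex

/-- For a Borel-type monomial ideal `J` with `dim(S/J) = d` and
`r ≥ n - d`, the quotient `J₂/J₁` (with `J₁ = (J ∩ k[x_1,…,x_r])S` and
`J₂ = J : (x_{r+1}⋯x_n)^∞`) is a free module of finite rank over `k[x_{r+1},…,x_n]`. -/
theorem stmt10 {k : Type*} [Field k] {n : ℕ}
    (J : Ideal (MvPolynomial (Fin n) k)) (hB : IsBorelType J)
    (d : ℕ) (hd : qdim J = (d : WithBot (WithTop ℕ)))
    (r : ℕ) (hrn : r ≤ n) (hrd : n - d ≤ r) :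
    @Module.Free (MvPolynomial (Fin (n - r)) k) (quotMod (Jone r J) (Phi r J)) _ _
      (quotModTail r hrn (Jone r J) (Phi r J)) ∧
    @Module.Finite (MvPolynomial (Fin (n - r)) k) (quotMod (Jone r J) (Phi r J)) _ _
      (quotModTail r hrn (Jone r J) (Phi r J)) :=
  stmt10_general J hB r hrn
end
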